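/- For every real m ≥ 0 and every real x > 0, one has m / (2 (x² + m)^{3/2}) ≤ 1/x − V_m(x) < (m+1)/(2 x³). -/

import Mathlib

open MeasureTheory Real Set

/-- The one-dimensional regularized Coulomb potential `V_m(x)`. -/
noncomputable def V (m x : ℝ) : ℝ :=
  (1 / Real.Gamma (m + 1)) *
    ∫ u in Set.Ioi (0:ℝ), u ^ m * Real.exp (-u) / Real.sqrt (x ^ 2 + u)

/-!
`Γ(m + 1) V_m(x)` is the integral of `(x² + u)^(-1/2)` against the Gamma weight `uᵐ e^(-u)`.

The upper bound averages the pointwise inequality `1/x - (x² + u)^(-1/2) < u / (2x³)` against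
this weight, whose normalized mean is `m + 1`.

For the lower bound, the subordination identity `s^(-1/2) = π^(-1/2) ∫₀^∞ t^(-1/2) e^(-s t) dt`
and Fubini give `V_m(x) = π^(-1/2) ∫₀^∞ t^(-1/2) e^(-x² t) (1 + t)^(-(m+1)) dt`. The elementary
inequality `(1 + t)^(-(m+1)) ≤ 1 - m t e^(-m t)` bounds this by
`π^(-1/2) ∫₀^∞ (t^(-1/2) e^(-x² t) - m t^(1/2) e^(-(x² + m) t)) dt = 1/x - m / (2 (x² + m)^(3/2))`.
-/

theorem one_div_one_add_rpow_le_exp {a t : ℝ} (ha : 0 ≤ a) (ht : 0 ≤ t) :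
    1 / (1 + t) ^ a ≤ exp (-(a * t / (1 + t))) := by
  have h1t : 0 < 1 + t := by linarith
  have hlog : t / (1 + t) ≤ log (1 + t) := by
    have h : 1 - (1 + t)⁻¹ = t / (1 + t) := by field_simp; ring
    exact h ▸ one_sub_inv_le_log_of_pos h1t
  rw [rpow_def_of_pos h1t, one_div, ← exp_neg, exp_le_exp, neg_le_neg_iff, mul_div_assoc]
  exact (mul_le_mul_of_nonneg_left hlog ha).trans_eq (mul_comm _ _)

theorem one_div_one_add_rpow_add_mul_exp_neg_le_one {m t : ℝ} (hm : 0 ≤ m) (ht : 0 ≤ t) :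
    1 / (1 + t) ^ (m + 1) + m * t * exp (-(m * t)) ≤ 1 := by
  have h1t : 0 < 1 + t := by linarith
  rcases le_or_gt (m * t) 1 with hmt | hmt
  · set r := m * t / (1 + t)
    have hr : 0 ≤ r := by positivity
    have hpow : 1 / (1 + t) ^ (m + 1) ≤ exp (-r) * (1 / (1 + t)) := by
      rw [rpow_add_one h1t.ne', ← one_div_mul_one_div]
      exact mul_le_mul_of_nonneg_right (one_div_one_add_rpow_le_exp hm ht) (by positivity)
    have hexp : m * t * exp (-(m * t)) ≤ m * t * exp (-r) := by
      refine mul_le_mul_of_nonneg_left (exp_le_exp.mpr (neg_le_neg ?_)) (by positivity)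
      exact div_le_self (by positivity) (by linarith)
    have hsum : 1 / (1 + t) + m * t ≤ 1 + r := by
      rw [← sub_nonneg]
      have hdiff : 1 + r - (1 / (1 + t) + m * t) = t * (1 - m * t) / (1 + t) := by
        simp only [r]; field_simp; ring
      rw [hdiff]; exact div_nonneg (mul_nonneg ht (by linarith)) h1t.le
    have hexp_r : exp (-r) * (1 + r) ≤ 1 := by
      have := mul_le_mul_of_nonneg_left (add_one_le_exp r) (exp_nonneg (-r))
      rwa [← exp_add, neg_add_cancel, exp_zero, add_comm] at this
    nlinarith [exp_nonneg (-r)]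
  · have hpow : 1 / (1 + t) ^ (m + 1) ≤ exp (-1) := by
      refine (one_div_one_add_rpow_le_exp (by linarith) ht).trans (exp_le_exp.mpr ?_)
      rw [neg_le_neg_iff, le_div_iff₀ h1t]
      linarith
    linarith [mul_exp_neg_le_exp_neg_one (m * t), exp_neg_one_lt_half]

theorem one_div_sub_one_div_sqrt_lt {x u : ℝ} (hx : 0 < x) (hu : 0 < u) :
    1 / x - 1 / √(x ^ 2 + u) < u / (2 * x ^ 3) := by
  set s := √(x ^ 2 + u)
  have hs2 : s ^ 2 = x ^ 2 + u := sq_sqrt (by positivity)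
  have hxs : x < s := lt_sqrt_of_sq_lt (by linarith)
  have hs : 0 < s := hx.trans hxs
  have hdiff : 1 / x - 1 / s = u / (x * s * (s + x)) := by
    rw [div_sub_div _ _ hx.ne' hs.ne', div_eq_div_iff (by positivity) (by positivity)]
    linear_combination (x * s) * hs2
  rw [hdiff]
  exact div_lt_div_of_pos_left hu (by positivity) (by nlinarith [mul_lt_mul_of_pos_left hxs hx])

theorem setIntegral_lt_setIntegral_of_forall_lt {X : Type*} [MeasurableSpace X] {μ : Measure X}
    {s : Set X} {f g : X → ℝ} (hs : MeasurableSet s) (hμs : μ s ≠ 0)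
    (hf : IntegrableOn f s μ) (hg : IntegrableOn g s μ) (hlt : ∀ x ∈ s, f x < g x) :
    ∫ x in s, f x ∂μ < ∫ x in s, g x ∂μ := by
  rw [← sub_pos, ← integral_sub hg hf]
  refine (setIntegral_pos_iff_support_of_nonneg_ae ?_ (hg.sub hf)).mpr ?_
  · filter_upwards [ae_restrict_mem hs] with x hx using sub_nonneg.mpr (hlt x hx).le
  · have hsupp : Function.support (g - f) ∩ s = s :=
      inter_eq_right.mpr fun x hx ↦ sub_ne_zero.mpr (hlt x hx).ne'
    rw [hsupp]
    exact pos_iff_ne_zero.mpr hμs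

theorem integrableOn_rpow_mul_exp_neg_mul {a r : ℝ} (ha : -1 < a) (hr : 0 < r) :
    IntegrableOn (fun t : ℝ ↦ t ^ a * exp (-(r * t))) (Ioi 0) := by
  simpa only [rpow_one, neg_mul] using
    integrableOn_rpow_mul_exp_neg_mul_rpow ha zero_lt_one hr

theorem integrableOn_rpow_mul_exp_neg {a : ℝ} (ha : -1 < a) :
    IntegrableOn (fun t : ℝ ↦ t ^ a * exp (-t)) (Ioi 0) := by
  simpa using integrableOn_rpow_mul_exp_neg_mul ha one_pos

theorem integrableOn_rpow_mul_exp_neg_div_sqrt_add {m c : ℝ} (hm : -1 < m) (hc : 0 < c) :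
    IntegrableOn (fun u : ℝ ↦ u ^ m * exp (-u) / √(c + u)) (Ioi 0) := by
  refine ((integrableOn_rpow_mul_exp_neg hm).div_const √c).mono'
    (Measurable.aestronglyMeasurable (by fun_prop)) ?_
  filter_upwards [ae_restrict_mem measurableSet_Ioi] with u (hu : 0 < u)
  rw [norm_of_nonneg (by positivity)]
  gcongr
  linarith

theorem integral_rpow_mul_exp_neg_mul {a r : ℝ} (ha : -1 < a) (hr : 0 < r) :
    ∫ t in Ioi (0 : ℝ), t ^ a * exp (-(r * t)) = Gamma (a + 1) / r ^ (a + 1) := by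
  have := integral_rpow_mul_exp_neg_mul_Ioi (neg_lt_iff_pos_add.mp ha) hr
  rw [add_sub_cancel_right, div_rpow zero_le_one hr.le, one_rpow] at this
  rw [this, one_div_mul_eq_div]

theorem integral_rpow_mul_exp_neg {a : ℝ} (ha : -1 < a) :
    ∫ t in Ioi (0 : ℝ), t ^ a * exp (-t) = Gamma (a + 1) := by
  simpa using integral_rpow_mul_exp_neg_mul ha one_pos

theorem integral_rpow_neg_half_mul_exp_neg_mul {r : ℝ} (hr : 0 < r) :
    ∫ t in Ioi (0 : ℝ), t ^ (-(1 / 2) : ℝ) * exp (-(r * t)) = √π / √r := by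
  rw [integral_rpow_mul_exp_neg_mul (by norm_num) hr, show -(1 / 2) + 1 = (1 / 2 : ℝ) by norm_num,
    Gamma_one_half_eq, sqrt_eq_rpow, sqrt_eq_rpow]

theorem integral_rpow_half_mul_exp_neg_mul {r : ℝ} (hr : 0 < r) :
    ∫ t in Ioi (0 : ℝ), t ^ (1 / 2 : ℝ) * exp (-(r * t)) = √π / (2 * r ^ (3 / 2 : ℝ)) := by
  rw [integral_rpow_mul_exp_neg_mul (by norm_num) hr,
    Gamma_add_one (by norm_num), Gamma_one_half_eq, show (1 / 2 + 1 : ℝ) = 3 / 2 by norm_num]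
  ring

theorem integral_rpow_mul_exp_neg_div_sqrt_add {m c : ℝ} (hm : -1 < m) (hc : 0 < c) :
    ∫ u in Ioi (0 : ℝ), u ^ m * exp (-u) / √(c + u) =
      Gamma (m + 1) / √π *
        ∫ t in Ioi (0 : ℝ), t ^ (-(1 / 2) : ℝ) * exp (-(c * t)) / (1 + t) ^ (m + 1) := by
  set F : ℝ → ℝ → ℝ := fun u t ↦ u ^ m * exp (-u) * (t ^ (-(1 / 2) : ℝ) * exp (-((c + u) * t)))
  have hF_nonneg : ∀ u ∈ Ioi (0 : ℝ), ∀ t ∈ Ioi (0 : ℝ), 0 ≤ F u t := by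
    intro u (hu : 0 < u) t (ht : 0 < t); positivity
  have hF_t : ∀ u ∈ Ioi (0 : ℝ),
      ∫ t in Ioi (0 : ℝ), F u t = √π * (u ^ m * exp (-u) / √(c + u)) := by
    intro u (hu : 0 < u)
    rw [integral_const_mul, integral_rpow_neg_half_mul_exp_neg_mul (by positivity)]
    ring
  have hF_u : ∀ t ∈ Ioi (0 : ℝ), ∫ u in Ioi (0 : ℝ), F u t =
      Gamma (m + 1) * (t ^ (-(1 / 2) : ℝ) * exp (-(c * t)) / (1 + t) ^ (m + 1)) := by
    intro t (ht : 0 < t)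
    have : ∀ u, F u t = t ^ (-(1 / 2) : ℝ) * exp (-(c * t)) * (u ^ m * exp (-((1 + t) * u))) := by
      intro u
      have hexp : exp (-u) * exp (-((c + u) * t)) = exp (-(c * t)) * exp (-((1 + t) * u)) := by
        rw [← exp_add, ← exp_add]; ring_nf
      linear_combination (u ^ m * t ^ (-(1 / 2) : ℝ)) * hexp
    simp_rw [this]
    rw [integral_const_mul, integral_rpow_mul_exp_neg_mul hm (by linarith)]
    ring
  have hF : Integrable (Function.uncurry F)
      ((volume.restrict (Ioi (0 : ℝ))).prod (volume.restrict (Ioi 0))) := by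
    refine (integrable_prod_iff (by fun_prop)).mpr ⟨?_, ?_⟩
    · filter_upwards [ae_restrict_mem measurableSet_Ioi] with u (hu : 0 < u)
      exact (integrableOn_rpow_mul_exp_neg_mul (a := -(1 / 2)) (by norm_num)
        (by positivity : 0 < c + u)).const_mul (u ^ m * exp (-u))
    · refine IntegrableOn.congr_fun
        ((integrableOn_rpow_mul_exp_neg_div_sqrt_add hm hc).const_mul √π) (fun u hu ↦ ?_)
        measurableSet_Ioi
      rw [← hF_t u hu]
      exact setIntegral_congr_fun measurableSet_Ioi
        fun t ht ↦ (norm_of_nonneg (hF_nonneg u hu t ht)).symm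
  calc ∫ u in Ioi (0 : ℝ), u ^ m * exp (-u) / √(c + u)
      = (√π)⁻¹ * ∫ u in Ioi (0 : ℝ), ∫ t in Ioi (0 : ℝ), F u t := by
        rw [setIntegral_congr_fun measurableSet_Ioi hF_t, integral_const_mul,
          inv_mul_cancel_left₀ (sqrt_pos.mpr pi_pos).ne']
    _ = (√π)⁻¹ * ∫ t in Ioi (0 : ℝ), ∫ u in Ioi (0 : ℝ), F u t := by
        rw [integral_integral_swap hF]
    _ = _ := by
        rw [setIntegral_congr_fun measurableSet_Ioi hF_u, integral_const_mul]
        ring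

theorem integral_rpow_neg_half_mul_exp_neg_mul_div_one_add_rpow_le {m c : ℝ} (hm : 0 ≤ m)
    (hc : 0 < c) :
    ∫ t in Ioi (0 : ℝ), t ^ (-(1 / 2) : ℝ) * exp (-(c * t)) / (1 + t) ^ (m + 1) ≤
      √π * (1 / √c - m / (2 * (c + m) ^ (3 / 2 : ℝ))) := by
  have h₁ := integrableOn_rpow_mul_exp_neg_mul (a := -(1 / 2)) (by norm_num) hc
  have h₂ := (integrableOn_rpow_mul_exp_neg_mul (a := 1 / 2) (by norm_num)
    (by positivity : 0 < c + m)).const_mul m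
  have hle : ∀ t ∈ Ioi (0 : ℝ), t ^ (-(1 / 2) : ℝ) * exp (-(c * t)) / (1 + t) ^ (m + 1) ≤
      t ^ (-(1 / 2) : ℝ) * exp (-(c * t)) - m * (t ^ (1 / 2 : ℝ) * exp (-((c + m) * t))) := by
    intro t (ht : 0 < t)
    have hsplit : t ^ (1 / 2 : ℝ) * exp (-((c + m) * t)) =
        t ^ (-(1 / 2) : ℝ) * exp (-(c * t)) * (t * exp (-(m * t))) := by
      have hpow : t ^ (1 / 2 : ℝ) = t ^ (-(1 / 2) : ℝ) * t := by
        rw [← rpow_add_one ht.ne']; norm_num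
      have hexp : exp (-((c + m) * t)) = exp (-(c * t)) * exp (-(m * t)) := by
        rw [← exp_add]; ring_nf
      rw [hpow, hexp]; ring
    have hkey := one_div_one_add_rpow_add_mul_exp_neg_le_one hm ht.le
    rw [hsplit, div_eq_mul_one_div _ ((1 + t) ^ (m + 1))]
    nlinarith [show 0 ≤ t ^ (-(1 / 2) : ℝ) * exp (-(c * t)) by positivity]
  have hint : IntegrableOn
      (fun t : ℝ ↦ t ^ (-(1 / 2) : ℝ) * exp (-(c * t)) / (1 + t) ^ (m + 1)) (Ioi 0) := by
    refine h₁.mono' (Measurable.aestronglyMeasurable (by fun_prop)) ?_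
    filter_upwards [ae_restrict_mem measurableSet_Ioi] with t (ht : 0 < t)
    rw [norm_of_nonneg (by positivity)]
    exact div_le_self (by positivity) (one_le_rpow (by linarith) (by linarith))
  calc _ ≤ ∫ t in Ioi (0 : ℝ),
        (t ^ (-(1 / 2) : ℝ) * exp (-(c * t)) - m * (t ^ (1 / 2 : ℝ) * exp (-((c + m) * t)))) :=
        setIntegral_mono_on hint (h₁.sub h₂) measurableSet_Ioi hle
    _ = _ := by
        rw [integral_sub h₁ h₂, integral_const_mul, integral_rpow_neg_half_mul_exp_neg_mul hc,
          integral_rpow_half_mul_exp_neg_mul (by positivity)]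
        ring

theorem V_le_one_div_sub {m x : ℝ} (hm : 0 ≤ m) (hx : 0 < x) :
    V m x ≤ 1 / x - m / (2 * (x ^ 2 + m) ^ (3 / 2 : ℝ)) := by
  have hπ : 0 < √π := sqrt_pos.mpr pi_pos
  have hle := integral_rpow_neg_half_mul_exp_neg_mul_div_one_add_rpow_le hm (pow_pos hx 2)
  rw [sqrt_sq hx.le] at hle
  have hΓ : 1 / Gamma (m + 1) * (Gamma (m + 1) / √π) = 1 / √π := by
    field_simp [(Gamma_pos_of_pos (by linarith : 0 < m + 1)).ne']
  rw [V, integral_rpow_mul_exp_neg_div_sqrt_add (by linarith) (pow_pos hx 2),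
    ← mul_assoc, hΓ, one_div_mul_eq_div, div_le_iff₀' hπ]
  exact hle

theorem one_div_sub_V_lt {m x : ℝ} (hm : -1 < m) (hx : 0 < x) :
    1 / x - V m x < (m + 1) / (2 * x ^ 3) := by
  have hΓ : 0 < Gamma (m + 1) := Gamma_pos_of_pos (by linarith)
  have hw := integrableOn_rpow_mul_exp_neg hm
  have hlt := setIntegral_lt_setIntegral_of_forall_lt measurableSet_Ioi (by simp)
    ((hw.div_const x).sub (integrableOn_rpow_mul_exp_neg_div_sqrt_add hm (pow_pos hx 2)))
    ((integrableOn_rpow_mul_exp_neg (a := m + 1) (by linarith)).div_const (2 * x ^ 3))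
    fun u (hu : 0 < u) ↦ by
      calc u ^ m * exp (-u) / x - u ^ m * exp (-u) / √(x ^ 2 + u)
          = u ^ m * exp (-u) * (1 / x - 1 / √(x ^ 2 + u)) := by ring
        _ < u ^ m * exp (-u) * (u / (2 * x ^ 3)) :=
          mul_lt_mul_of_pos_left (one_div_sub_one_div_sqrt_lt hx hu) (by positivity)
        _ = u ^ (m + 1) * exp (-u) / (2 * x ^ 3) := by rw [rpow_add_one hu.ne']; ring
  simp only [Pi.sub_apply] at hlt
  rw [integral_sub (hw.div_const x) (integrableOn_rpow_mul_exp_neg_div_sqrt_add hm (pow_pos hx 2)),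
    integral_div, integral_div, integral_rpow_mul_exp_neg hm,
    integral_rpow_mul_exp_neg (by linarith), Gamma_add_one (s := m + 1) (by linarith)] at hlt
  have hV : 1 / x - V m x = (Gamma (m + 1) / x -
      ∫ u in Ioi (0 : ℝ), u ^ m * exp (-u) / √(x ^ 2 + u)) / Gamma (m + 1) := by
    rw [V]; field_simp
  rw [hV, div_lt_iff₀ hΓ, div_mul_eq_mul_div]
  linarith

theorem V_large_x_bounds (m x : ℝ) (hm : 0 ≤ m) (hx : 0 < x) :
    m / (2 * (x ^ 2 + m) ^ ((3:ℝ)/2)) ≤ 1 / x - V m x ∧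
    1 / x - V m x < (m + 1) / (2 * x ^ 3) :=
  ⟨by linarith [V_le_one_div_sub hm hx], one_div_sub_V_lt (by linarith) hx⟩
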